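/- arXiv:2006.05807 — 2 statements merged into one kernel-verified Lean document; each statement's English description precedes it below -/
import Mathlib

section
/- Let I ⊂ ℝ^d be a dyadic cube of side length ℓ(I), let k ≥ 2 and let K = I^{(k)} be its k-th dyadic ancestor (so K ⊇ I and ℓ(K) = 2^k ℓ(I)). Assume the goodness condition dist(I, ∂K) ≥ 2^{k-2} ℓ(I). Then for every m ∈ ℤ^d with |m| ≤ 2^{k-2} (Euclidean norm), the translated cube I + m ℓ(I) is contained in K; in particular (I + m ℓ(I))^{(k)} = K. -/
/-!
Moving a point of `closure K` along the `i`-th coordinate axis onto either face of `K` lands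
in `frontier K` at distance equal to the gap in that coordinate. Applied to the points of
`closure I` (where goodness still holds, `dist` being continuous), this shows that in every
coordinate `I` lies at least `2^k/4 · ℓ` away from both faces of `K`, while the translation by
`m ℓ` moves each coordinate by at most `|m| ℓ ≤ 2^k/4 · ℓ`.
-/

open Set

section EuclideanBox

variable {ι : Type*} {lo hi : ι → ℝ}

lemma setOf_forall_mem_euclidean_eq_preimage (s : ι → Set ℝ) :
    {x : EuclideanSpace ℝ ι | ∀ i, x i ∈ s i} =
      PiLp.homeomorph 2 (fun _ : ι => ℝ) ⁻¹' univ.pi s := by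
  ext x; simp [PiLp.homeomorph]

lemma closure_euclideanBox (h : ∀ i, lo i < hi i) :
    closure {x : EuclideanSpace ℝ ι | ∀ i, lo i ≤ x i ∧ x i < hi i} =
      {x | ∀ i, lo i ≤ x i ∧ x i ≤ hi i} := by
  change closure {x : EuclideanSpace ℝ ι | ∀ i, x i ∈ Ico (lo i) (hi i)} =
    {x | ∀ i, x i ∈ Icc (lo i) (hi i)}
  simp only [setOf_forall_mem_euclidean_eq_preimage, ← Homeomorph.preimage_closure,
    closure_pi_set, closure_Ico (h _).ne]

variable [Fintype ι]

lemma interior_euclideanBox :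
    interior {x : EuclideanSpace ℝ ι | ∀ i, lo i ≤ x i ∧ x i < hi i} =
      {x | ∀ i, lo i < x i ∧ x i < hi i} := by
  change interior {x : EuclideanSpace ℝ ι | ∀ i, x i ∈ Ico (lo i) (hi i)} =
    {x | ∀ i, x i ∈ Ioo (lo i) (hi i)}
  simp only [setOf_forall_mem_euclidean_eq_preimage, ← Homeomorph.preimage_interior,
    interior_pi_set finite_univ, interior_Ico]

lemma add_single_mem_frontier_euclideanBox [DecidableEq ι] (h : ∀ i, lo i < hi i)
    {x : EuclideanSpace ℝ ι} (hx : ∀ i, lo i ≤ x i ∧ x i ≤ hi i) (i : ι) {t : ℝ}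
    (ht : x i + t = lo i ∨ x i + t = hi i) :
    x + EuclideanSpace.single i t ∈
      frontier {z : EuclideanSpace ℝ ι | ∀ i, lo i ≤ z i ∧ z i < hi i} := by
  rw [frontier, closure_euclideanBox h, interior_euclideanBox]
  refine ⟨fun j => ?_, fun hint => ?_⟩
  · rcases eq_or_ne j i with rfl | hj
    · simp only [PiLp.add_apply, PiLp.single_eq_same]
      rcases ht with ht | ht <;> rw [ht] <;> exact ⟨by linarith [h j], by linarith [h j]⟩
    · simpa [hj] using hx j
  · have := hint i
    simp only [PiLp.add_apply, PiLp.single_eq_same] at this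
    rcases ht with ht | ht <;> linarith

lemma le_sub_and_le_sub_of_le_dist_frontier_euclideanBox (h : ∀ i, lo i < hi i)
    {x : EuclideanSpace ℝ ι}
    (hx : x ∈ closure {z : EuclideanSpace ℝ ι | ∀ i, lo i ≤ z i ∧ z i < hi i}) {c : ℝ}
    (hc : ∀ y ∈ frontier {z : EuclideanSpace ℝ ι | ∀ i, lo i ≤ z i ∧ z i < hi i}, c ≤ dist x y)
    (i : ι) : c ≤ x i - lo i ∧ c ≤ hi i - x i := by
  classical
  rw [closure_euclideanBox h] at hx
  have hdist (t : ℝ) (ht : x i + t = lo i ∨ x i + t = hi i) : c ≤ |t| := by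
    simpa [dist_self_add_right, PiLp.norm_single] using
      hc _ (add_single_mem_frontier_euclideanBox h hx i ht)
  constructor
  · have := hdist (lo i - x i) (.inl (by ring))
    rwa [abs_sub_comm, abs_of_nonneg (by linarith [hx i])] at this
  · have := hdist (hi i - x i) (.inr (by ring))
    rwa [abs_of_nonneg (by linarith [hx i])] at this

end EuclideanBox

lemma abs_le_sqrt_sum_sq {ι : Type*} [Fintype ι] (f : ι → ℝ) (i : ι) :
    |f i| ≤ Real.sqrt (∑ j, f j ^ 2) :=
  Real.abs_le_sqrt (Finset.single_le_sum (fun j _ => sq_nonneg (f j)) (Finset.mem_univ i))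

theorem stmt2_general (d k : ℕ) (ℓ : ℝ) (hℓ : 0 < ℓ)
    (a b : EuclideanSpace ℝ (Fin d))
    (I K : Set (EuclideanSpace ℝ (Fin d)))
    (hI : I = {x | ∀ i, a i ≤ x i ∧ x i < a i + ℓ})
    (hK : K = {x | ∀ i, b i ≤ x i ∧ x i < b i + 2 ^ k * ℓ})
    (hIK : I ⊆ K)
    (hgood : ∀ x ∈ I, ∀ y ∈ frontier K, (2:ℝ) ^ k / 4 * ℓ ≤ dist x y)
    (m : Fin d → ℤ)
    (hm : Real.sqrt (∑ i, ((m i : ℝ)) ^ 2) ≤ (2:ℝ) ^ k / 4) :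
    {x : EuclideanSpace ℝ (Fin d) |
        ∀ i, a i + (m i : ℝ) * ℓ ≤ x i ∧ x i < a i + (m i : ℝ) * ℓ + ℓ} ⊆ K := by
  set c := (2:ℝ) ^ k / 4 * ℓ
  have hIbox : ∀ i, a i < a i + ℓ := fun i => lt_add_of_pos_right _ hℓ
  have hKbox : ∀ i, b i < b i + 2 ^ k * ℓ := fun i => lt_add_of_pos_right _ (by positivity)
  have hgood_closure : ∀ x ∈ closure I, ∀ y ∈ frontier K, c ≤ dist x y := fun x hx y hy =>
    closure_minimal (fun x hx => hgood x hx y hy)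
      (isClosed_le continuous_const (continuous_id.dist continuous_const)) hx
  have hgap (x) (hx : x ∈ closure I) (i) : c ≤ x i - b i ∧ c ≤ b i + 2 ^ k * ℓ - x i := by
    subst hK
    exact le_sub_and_le_sub_of_le_dist_frontier_euclideanBox hKbox (closure_mono hIK hx)
      (hgood_closure x hx) i
  have hlow (i) : c ≤ a i - b i :=
    (hgap a (subset_closure (hI ▸ fun j => ⟨le_rfl, hIbox j⟩)) i).1
  have hhigh (i) : c ≤ b i + 2 ^ k * ℓ - (a i + ℓ) := by
    have hmem : a + EuclideanSpace.single i ℓ ∈ closure I := by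
      rw [hI, closure_euclideanBox hIbox]
      intro j
      rcases eq_or_ne j i with rfl | hj
      · simp [hℓ.le]
      · simp [hj, hℓ.le]
    simpa using (hgap _ hmem i).2
  have hshift (i) : |(m i : ℝ) * ℓ| ≤ c := by
    rw [abs_mul, abs_of_pos hℓ]
    exact mul_le_mul_of_nonneg_right ((abs_le_sqrt_sum_sq _ i).trans hm) hℓ.le
  intro x hx
  rw [hK]
  intro i
  have := abs_le.mp (hshift i)
  constructor <;> linarith [hx i, hlow i, hhigh i]

/-- Let `I ⊂ ℝ^d` be a (dyadic) cube of side length `ℓ`, `k ≥ 2`, and let `K` be its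
`k`-th dyadic ancestor, so `I ⊆ K` and `ℓ(K) = 2^k ℓ`. Assume the goodness condition
`dist(I, ∂K) ≥ 2^{k-2} ℓ`. Then for every `m ∈ ℤ^d` with Euclidean norm `|m| ≤ 2^{k-2}`,
the translated cube `I + m ℓ` is contained in `K`. -/
theorem stmt2 (d k : ℕ) (hd : 1 ≤ d) (hk : 2 ≤ k) (ℓ : ℝ) (hℓ : 0 < ℓ)
    (a b : EuclideanSpace ℝ (Fin d))
    (I K : Set (EuclideanSpace ℝ (Fin d)))
    (hI : I = {x | ∀ i, a i ≤ x i ∧ x i < a i + ℓ})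
    (hK : K = {x | ∀ i, b i ≤ x i ∧ x i < b i + 2 ^ k * ℓ})
    (hIK : I ⊆ K)
    (hgood : ∀ x ∈ I, ∀ y ∈ frontier K, (2:ℝ) ^ k / 4 * ℓ ≤ dist x y)
    (m : Fin d → ℤ)
    (hm : Real.sqrt (∑ i, ((m i : ℝ)) ^ 2) ≤ (2:ℝ) ^ k / 4) :
    {x : EuclideanSpace ℝ (Fin d) |
        ∀ i, a i + (m i : ℝ) * ℓ ≤ x i ∧ x i < a i + (m i : ℝ) * ℓ + ℓ} ⊆ K :=
  stmt2_general d k ℓ hℓ a b I K hI hK hIK hgood m hm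
end

section
/- Let 𝒜 be an associative algebra over ℂ with a subspace ℒ¹ and a linear functional τ : ℒ¹ → ℂ. For a Banach subspace X ⊂ 𝒜, define Y(X) = {e ∈ 𝒜 : ex ∈ ℒ¹ for all x ∈ X} with seminorm |e|_{Y(X)} = sup{|τ(ex)| : x ∈ X, |x|_X = 1}, and the map Λ : Y(X) → X*, Λ_y(x) = τ(yx). Call X admissible if (i) Y(X) is a Banach space under |·|_{Y(X)}, (ii) y ↦ Λ_y is surjective onto X*, and (iii) for all x ∈ X, y ∈ Y(X) one has xy ∈ ℒ¹ and τ(xy) = τ(yx). Then: if X is admissible and reflexive and Y(X) is also admissible, one has Y(Y(X)) = X as sets and |x|_{Y(Y(X))} = |x|_X for all x ∈ X. -/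
/-!
By admissibility of `X`, the pairing `(y, x) ↦ τ(y x)` identifies `Y(X)` isometrically with
`X*`. An element `z` of `Y(Y(X))` then defines the functional `f ↦ τ(z Λ⁻¹ f)` on `X*`, which by
reflexivity is evaluation at some `x ∈ X`. By condition (iii) for `X`, `x` lies in `Y(Y(X))` and
pairs with `Y(X)` exactly as `z` does; since the norm of `Y(Y(X))` is computed by this pairing,
`z = x`. Likewise `|x|_{Y(Y(X))}` is the supremum of `|f x|` over the unit sphere of `X*`, which
is `‖x‖` by Hahn–Banach.
-/

noncomputable section
open scoped Classical

/-- The trace `τ : ℒ¹ → ℂ`, extended by junk value `0` outside `ℒ¹`. -/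
def tr {𝒜 : Type*} [Ring 𝒜] [Algebra ℂ 𝒜] (L1 : Submodule ℂ 𝒜) (τ : L1 →ₗ[ℂ] ℂ)
    (e : 𝒜) : ℂ :=
  if h : e ∈ L1 then τ ⟨e, h⟩ else 0

lemma ContinuousLinearMap.norm_eq_sSup_norm_apply {𝕜 E F : Type*} [RCLike 𝕜]
    [NormedAddCommGroup E] [NormedSpace 𝕜 E] [NormedAddCommGroup F] [NormedSpace 𝕜 F]
    (f : E →L[𝕜] F) : ‖f‖ = sSup {r : ℝ | ∃ x : E, ‖x‖ = 1 ∧ r = ‖f x‖} := by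
  rw [← f.sSup_sphere_eq_norm]
  congr 1
  ext r
  simp [eq_comm]

section NormingPairing

variable {𝕜 E F : Type*} [RCLike 𝕜] [NormedAddCommGroup E] [NormedSpace 𝕜 E]
  [NormedAddCommGroup F] [NormedSpace 𝕜 F]

def IsNormingPairing (B : E →ₗ[𝕜] F →ₗ[𝕜] 𝕜) : Prop :=
  ∀ e : E, ‖e‖ = sSup {r : ℝ | ∃ f : F, ‖f‖ = 1 ∧ r = ‖B e f‖}

namespace IsNormingPairing

variable {B : E →ₗ[𝕜] F →ₗ[𝕜] 𝕜}

lemma norm_apply_le (hB : IsNormingPairing B) (e : E) (f : F) : ‖B e f‖ ≤ ‖e‖ * ‖f‖ := by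
  by_cases hbdd : BddAbove {r : ℝ | ∃ f : F, ‖f‖ = 1 ∧ r = ‖B e f‖}
  · rcases eq_or_ne f 0 with rfl | hf
    · simp
    have hunit : ‖B e ((‖f‖⁻¹ : 𝕜) • f)‖ ≤ ‖e‖ :=
      hB e ▸ le_csSup hbdd ⟨_, norm_smul_inv_norm hf, rfl⟩
    calc ‖B e f‖ = ‖B e ((‖f‖⁻¹ : 𝕜) • f)‖ * ‖f‖ := by
          rw [map_smul, norm_smul, norm_inv, RCLike.norm_ofReal, abs_norm]
          field_simp
      _ ≤ ‖e‖ * ‖f‖ := by gcongr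
  · have he : e = 0 := norm_eq_zero.mp (by rw [hB e, Real.sSup_of_not_bddAbove hbdd])
    simp [he]

def toDual (hB : IsNormingPairing B) : E →ₗᵢ[𝕜] StrongDual 𝕜 F where
  toFun e := (B e).mkContinuous ‖e‖ (hB.norm_apply_le e)
  map_add' e e' := by ext; simp
  map_smul' c e := by ext; simp
  norm_map' e := by
    rw [ContinuousLinearMap.norm_eq_sSup_norm_apply, hB e]
    rfl

@[simp]
lemma toDual_apply (hB : IsNormingPairing B) (e : E) (f : F) : hB.toDual e f = B e f := rfl

lemma injective (hB : IsNormingPairing B) : Function.Injective (B : E → F →ₗ[𝕜] 𝕜) :=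
  fun e e' h => hB.toDual.injective (ContinuousLinearMap.ext fun f => by simp [h])

end IsNormingPairing

end NormingPairing

section Reflexive

variable {𝕜 X Y : Type*} [RCLike 𝕜] [NormedAddCommGroup X] [NormedSpace 𝕜 X]
  [NormedAddCommGroup Y] [NormedSpace 𝕜 Y]

lemma exists_apply_eq_of_surjective_inclusionInDoubleDual
    (hrefl : Function.Surjective (NormedSpace.inclusionInDoubleDual 𝕜 X))
    (Λ : Y ≃L[𝕜] StrongDual 𝕜 X) (g : StrongDual 𝕜 Y) : ∃ x : X, ∀ y : Y, g y = Λ y x := by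
  obtain ⟨x, hx⟩ := hrefl (g.comp Λ.symm.toContinuousLinearMap)
  refine ⟨x, fun y => ?_⟩
  simpa using (congrArg (fun φ : StrongDual 𝕜 (StrongDual 𝕜 X) => φ (Λ y)) hx).symm

lemma sSup_norm_apply_eq_norm (Λ : Y ≃ₗᵢ[𝕜] StrongDual 𝕜 X) (x : X) :
    sSup {r : ℝ | ∃ y : Y, ‖y‖ = 1 ∧ r = ‖Λ y x‖} = ‖x‖ := by
  have hset : {r : ℝ | ∃ y : Y, ‖y‖ = 1 ∧ r = ‖Λ y x‖} =
      {r : ℝ | ∃ f : StrongDual 𝕜 X, ‖f‖ = 1 ∧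
        r = ‖NormedSpace.inclusionInDoubleDual 𝕜 X x f‖} := by
    ext r
    simp only [Set.mem_ofPred_eq, NormedSpace.dual_def]
    simpa only [Λ.norm_map] using (Λ.surjective.exists (p := fun f => ‖f‖ = 1 ∧ r = ‖f x‖)).symm
  rw [hset, ← ContinuousLinearMap.norm_eq_sSup_norm_apply]
  exact (NormedSpace.inclusionInDoubleDualLi 𝕜).norm_map x

end Reflexive

section Trace

variable {𝒜 : Type*} [Ring 𝒜] [Algebra ℂ 𝒜] {L1 : Submodule ℂ 𝒜} (τ : L1 →ₗ[ℂ] ℂ)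

lemma tr_add {a b : 𝒜} (ha : a ∈ L1) (hb : b ∈ L1) :
    tr L1 τ (a + b) = tr L1 τ a + tr L1 τ b := by
  simp only [tr, dif_pos ha, dif_pos hb, dif_pos (L1.add_mem ha hb), ← map_add]
  rfl

lemma tr_smul {a : 𝒜} (ha : a ∈ L1) (c : ℂ) : tr L1 τ (c • a) = c * tr L1 τ a := by
  simp only [tr, dif_pos ha, dif_pos (L1.smul_mem c ha), ← smul_eq_mul, ← map_smul]
  rfl

variable {E F : Type*} [AddCommGroup E] [Module ℂ E] [AddCommGroup F] [Module ℂ F]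

def trPairing (ιE : E →ₗ[ℂ] 𝒜) (ιF : F →ₗ[ℂ] 𝒜) (h : ∀ e f, ιE e * ιF f ∈ L1) :
    E →ₗ[ℂ] F →ₗ[ℂ] ℂ :=
  LinearMap.mk₂ ℂ (fun e f => tr L1 τ (ιE e * ιF f))
    (fun e e' f => by rw [map_add, add_mul, tr_add τ (h e f) (h e' f)])
    (fun c e f => by rw [map_smul, smul_mul_assoc, tr_smul τ (h e f), smul_eq_mul])
    (fun e f f' => by rw [map_add, mul_add, tr_add τ (h e f) (h e f')])
    (fun c e f => by rw [map_smul, mul_smul_comm, tr_smul τ (h e f), smul_eq_mul])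

@[simp]
lemma trPairing_apply (ιE : E →ₗ[ℂ] 𝒜) (ιF : F →ₗ[ℂ] 𝒜) (h : ∀ e f, ιE e * ιF f ∈ L1)
    (e : E) (f : F) : trPairing τ ιE ιF h e f = tr L1 τ (ιE e * ιF f) := rfl

end Trace

theorem stmt14_general (𝒜 : Type*) [Ring 𝒜] [Algebra ℂ 𝒜]
    (L1 : Submodule ℂ 𝒜) (τ : L1 →ₗ[ℂ] ℂ)
    -- the admissible Banach subspace X of 𝒜
    (X : Type*) [NormedAddCommGroup X] [NormedSpace ℂ X]
    (ι : X →ₗ[ℂ] 𝒜)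
    -- (i) for X : Y(X) is a Banach space under the seminorm |·|_{Y(X)}; it is realized
    -- by the Banach space Y via the embedding ιY, with the correct carrier set and norm
    (Y : Type*) [NormedAddCommGroup Y] [NormedSpace ℂ Y]
    (ιY : Y →ₗ[ℂ] 𝒜)
    (hYset : Set.range ιY = {e : 𝒜 | ∀ x : X, e * ι x ∈ L1})
    (hYnorm : ∀ y : Y,
      ‖y‖ = sSup {r : ℝ | ∃ x : X, ‖x‖ = 1 ∧ r = ‖tr L1 τ (ιY y * ι x)‖})
    -- (ii) for X : y ↦ Λ_y is surjective onto X*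
    (hXsurj : ∀ f : StrongDual ℂ X, ∃ y : Y, ∀ x : X, f x = tr L1 τ (ιY y * ι x))
    -- (iii) for X
    (hXcomm : ∀ (x : X) (y : Y),
      ι x * ιY y ∈ L1 ∧ tr L1 τ (ι x * ιY y) = tr L1 τ (ιY y * ι x))
    -- X is reflexive
    (hrefl : Function.Surjective (NormedSpace.inclusionInDoubleDual ℂ X))
    -- Y(X) is also admissible: (i) for Y, realized by the Banach space Z
    (Z : Type*) [NormedAddCommGroup Z] [NormedSpace ℂ Z]
    (ιZ : Z →ₗ[ℂ] 𝒜)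
    (hZset : Set.range ιZ = {e : 𝒜 | ∀ y : Y, e * ιY y ∈ L1})
    (hZnorm : ∀ z : Z,
      ‖z‖ = sSup {r : ℝ | ∃ y : Y, ‖y‖ = 1 ∧ r = ‖tr L1 τ (ιZ z * ιY y)‖}) :
    {e : 𝒜 | ∀ y : Y, e * ιY y ∈ L1} = Set.range ι ∧
      ∀ x : X,
        sSup {r : ℝ | ∃ y : Y, ‖y‖ = 1 ∧ r = ‖tr L1 τ (ι x * ιY y)‖} = ‖x‖ := by
  have hB : IsNormingPairing (trPairing τ ιY ι fun y x => hYset.le ⟨y, rfl⟩ x) := hYnorm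
  have hC : IsNormingPairing (trPairing τ ιZ ιY fun z y => hZset.le ⟨z, rfl⟩ y) := hZnorm
  let Λ : Y ≃ₗᵢ[ℂ] StrongDual ℂ X := LinearIsometryEquiv.ofSurjective hB.toDual fun f =>
    (hXsurj f).imp fun y hy => ContinuousLinearMap.ext fun x => (hy x).symm
  refine ⟨Set.Subset.antisymm ?_ fun _ ⟨x, hx⟩ y => hx ▸ (hXcomm x y).1, fun x => ?_⟩
  · intro e he
    obtain ⟨z, rfl⟩ := hZset.ge he
    obtain ⟨x, hx⟩ := exists_apply_eq_of_surjective_inclusionInDoubleDual hrefl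
      Λ.toContinuousLinearEquiv (hC.toDual z)
    obtain ⟨z', hz'⟩ := hZset.ge fun y => (hXcomm x y).1
    refine ⟨x, hz'.symm.trans (congrArg ιZ (hC.injective (LinearMap.ext fun y => ?_)))⟩
    simp only [trPairing_apply, hz', (hXcomm x y).2]
    exact (hx y).symm
  · rw [← sSup_norm_apply_eq_norm Λ x]
    simp only [(hXcomm x _).2]
    rfl

/-- Let `𝒜` be an associative algebra over `ℂ` with a subspace `ℒ¹` and a linear trace
`τ : ℒ¹ → ℂ`. A Banach subspace `X ⊆ 𝒜` (realized by an injective linear embedding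
`ι : X → 𝒜`) is admissible when: (i) `Y(X) := {e | e·x ∈ ℒ¹ ∀x ∈ X}` with the seminorm
`|e| = sup{|τ(e·x)| : ‖x‖_X = 1}` is a Banach space (realized here by `Y`, `ιY`);
(ii) `y ↦ τ(y·–)` maps `Y(X)` onto `X*`; (iii) `x·y ∈ ℒ¹` and `τ(x·y) = τ(y·x)` for
`x ∈ X`, `y ∈ Y(X)`. If `X` is admissible and reflexive and `Y(X)` is also admissible
(with `Y(Y(X))` realized by `Z`, `ιZ`), then `Y(Y(X)) = X` as sets and
`|x|_{Y(Y(X))} = |x|_X` for all `x ∈ X`. -/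
theorem stmt14 (𝒜 : Type*) [Ring 𝒜] [Algebra ℂ 𝒜]
    (L1 : Submodule ℂ 𝒜) (τ : L1 →ₗ[ℂ] ℂ)
    -- the admissible Banach subspace X of 𝒜
    (X : Type*) [NormedAddCommGroup X] [NormedSpace ℂ X] [CompleteSpace X]
    (ι : X →ₗ[ℂ] 𝒜) (hι : Function.Injective ι)
    -- (i) for X : Y(X) is a Banach space under the seminorm |·|_{Y(X)}; it is realized
    -- by the Banach space Y via the embedding ιY, with the correct carrier set and norm
    (Y : Type*) [NormedAddCommGroup Y] [NormedSpace ℂ Y] [CompleteSpace Y]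
    (ιY : Y →ₗ[ℂ] 𝒜) (hιY : Function.Injective ιY)
    (hYset : Set.range ιY = {e : 𝒜 | ∀ x : X, e * ι x ∈ L1})
    (hYnorm : ∀ y : Y,
      ‖y‖ = sSup {r : ℝ | ∃ x : X, ‖x‖ = 1 ∧ r = ‖tr L1 τ (ιY y * ι x)‖})
    -- (ii) for X : y ↦ Λ_y is surjective onto X*
    (hXsurj : ∀ f : StrongDual ℂ X, ∃ y : Y, ∀ x : X, f x = tr L1 τ (ιY y * ι x))
    -- (iii) for X
    (hXcomm : ∀ (x : X) (y : Y),
      ι x * ιY y ∈ L1 ∧ tr L1 τ (ι x * ιY y) = tr L1 τ (ιY y * ι x))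
    -- X is reflexive
    (hrefl : Function.Surjective (NormedSpace.inclusionInDoubleDual ℂ X))
    -- Y(X) is also admissible: (i) for Y, realized by the Banach space Z
    (Z : Type*) [NormedAddCommGroup Z] [NormedSpace ℂ Z] [CompleteSpace Z]
    (ιZ : Z →ₗ[ℂ] 𝒜) (hιZ : Function.Injective ιZ)
    (hZset : Set.range ιZ = {e : 𝒜 | ∀ y : Y, e * ιY y ∈ L1})
    (hZnorm : ∀ z : Z,
      ‖z‖ = sSup {r : ℝ | ∃ y : Y, ‖y‖ = 1 ∧ r = ‖tr L1 τ (ιZ z * ιY y)‖})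
    -- (ii) for Y
    (hYsurj : ∀ g : StrongDual ℂ Y, ∃ z : Z, ∀ y : Y, g y = tr L1 τ (ιZ z * ιY y))
    -- (iii) for Y
    (hYcomm : ∀ (y : Y) (z : Z),
      ιY y * ιZ z ∈ L1 ∧ tr L1 τ (ιY y * ιZ z) = tr L1 τ (ιZ z * ιY y)) :
    {e : 𝒜 | ∀ y : Y, e * ιY y ∈ L1} = Set.range ι ∧
      ∀ x : X,
        sSup {r : ℝ | ∃ y : Y, ‖y‖ = 1 ∧ r = ‖tr L1 τ (ι x * ιY y)‖} = ‖x‖ :=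
  stmt14_general 𝒜 L1 τ X ι Y ιY hYset hYnorm hXsurj hXcomm hrefl Z ιZ hZset hZnorm
end
end
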